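/- Let A be an elementary abelian finite p-group and let 1 ≤ i ≤ p. Then every element of γ_i*(W(A)) can be written in the form λ_i(a_i)·λ_{i+1}(a_{i+1})·⋯·λ_p(a_p) with a_i, a_{i+1}, …, a_p ∈ A, and this representation is unique. -/

import Mathlib

open Pointwise

namespace GGS
noncomputable section

variable (p : ℕ)

def shiftAut (G : Type*) [Group G] : Multiplicative (ZMod p) →* MulAut (ZMod p → G) :=
  MonoidHom.mk'
    (fun k =>
      { toFun := fun g i => g (i + Multiplicative.toAdd k)
        invFun := fun g i => g (i - Multiplicative.toAdd k)
        left_inv := fun g => by funext i; simp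
        right_inv := fun g => by funext i; simp
        map_mul' := fun g h => rfl })
    (fun k l => by
      apply MulEquiv.ext
      intro g
      funext i
      show g (i + Multiplicative.toAdd (k * l)) = g (i + Multiplicative.toAdd k + Multiplicative.toAdd l)
      rw [toAdd_mul, add_assoc])

abbrev W (G : Type*) [Group G] :=
  SemidirectProduct (ZMod p → G) (Multiplicative (ZMod p)) (shiftAut p G)

def inlW (G : Type*) [Group G] : (ZMod p → G) →* W p G := SemidirectProduct.inl

def sigma (G : Type*) [Group G] : W p G := SemidirectProduct.inr (Multiplicative.ofAdd (1 : ZMod p))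

def baseW (G : Type*) [Group G] : Subgroup (W p G) := (inlW p G).range

/-- Δ(g) = [g,σ] = g⁻¹ σ⁻¹ g σ, read off in the base group. -/
def Delta (G : Type*) [Group G] (g : ZMod p → G) : ZMod p → G :=
  ((inlW p G g)⁻¹ * (sigma p G)⁻¹ * inlW p G g * sigma p G).left

/-- γ₁* = B(G), γ_{i+1}* = [γ_i*, W(G)]; here `gammaStar n` is γ_{n+1}*. -/
def gammaStar (G : Type*) [Group G] : ℕ → Subgroup (W p G)
  | 0 => baseW p G
  | (n + 1) => ⁅gammaStar G n, ⊤⁆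

def lamG (G : Type*) [Group G] (g : G) (i : ℕ) : ZMod p → G :=
  (Delta p G)^[i - 1] (fun t => if t = 0 then g else 1)

def BSub (G : Type*) [Group G] (H : Subgroup G) : Subgroup (W p G) :=
  Subgroup.map (inlW p G) (Subgroup.pi Set.univ fun _ => H)

def inlF (F : Type*) [AddGroup F] (v : ZMod p → F) : W p (Multiplicative F) :=
  inlW p (Multiplicative F) (fun i => Multiplicative.ofAdd (v i))

def DeltaF (F : Type*) [AddGroup F] (v : ZMod p → F) : ZMod p → F :=
  fun i => Multiplicative.toAdd (Delta p (Multiplicative F) (fun j => Multiplicative.ofAdd (v j)) i)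

def lamF (F : Type*) [AddGroup F] [One F] (i : ℕ) : ZMod p → F :=
  (DeltaF p F)^[i - 1] (fun j => if j = 0 then 1 else 0)

end
end GGS

open GGS

/-!
Write `T` for the shift `g ↦ g(· - 1)` on `B = ZMod p → A`, so that `Δ g = g⁻¹ · T g`. Conjugation
by `w ∈ W(A)` acts on `B` as a power of `T`, and `b / Tᵐ b` telescopes into a product of values of
`Δ`; hence `γ_{n+1}* = Δⁿ(B)` by induction. For `A` of exponent `p`, additively `Δ = T - 1` in the
ring `End(B)`, in which `p = 0`, so `(Δ + 1)ᵖ = Tᵖ = 1` forces `Δᵖ = 0`. Therefore the products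
`λ₁(a₁) ⋯ λ_p(a_p)` form a `Δ`-stable, hence `T`-stable, subgroup of `B` containing every
`λ₁(a) = (a, 1, …, 1)`, which is all of `B`. Counting (`|B| = |A|ᵖ`) makes the representation
unique, and applying `Δ^{i-1}` gives the statement for `γ_i*`.
-/

lemma pow_eq_zero_of_add_one_pow_eq_one {R : Type*} [Ring R] {p : ℕ} (hp : p.Prime)
    (hpR : (p : R) = 0) {d : R} (h : (d + 1) ^ p = 1) : d ^ p = 0 := by
  obtain ⟨r, hr⟩ := (Commute.one_right d).exists_add_pow_prime_eq hp
  rwa [hr, hpR, one_pow, zero_mul, zero_mul, zero_mul, add_zero, add_eq_right] at h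

namespace GGS

open Finset Function Multiplicative
open scoped commutatorElement

variable {p : ℕ}

lemma exists_ofAdd_neg_one_pow_eq [NeZero p] (k : Multiplicative (ZMod p)) :
    ∃ m : ℕ, ofAdd (-1 : ZMod p) ^ m = k :=
  ⟨(-toAdd k).val, by rw [← ofAdd_nsmul, nsmul_eq_mul, ZMod.natCast_zmod_val, mul_neg_one,
    neg_neg, ofAdd_toAdd]⟩

section Group

variable {G : Type*} [Group G]

@[simp]
lemma shiftAut_apply (k : Multiplicative (ZMod p)) (g : ZMod p → G) (t : ZMod p) :
    shiftAut p G k g t = g (t + toAdd k) := rfl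

lemma shiftAut_iterate (k : Multiplicative (ZMod p)) (n : ℕ) :
    (shiftAut p G k)^[n] = shiftAut p G (k ^ n) := by
  induction n with
  | zero => ext g; simp
  | succ n ih => rw [iterate_succ', ih, pow_succ', map_mul]; rfl

lemma sigma_inv_mul_inlW_mul_sigma (g : ZMod p → G) :
    (sigma p G)⁻¹ * inlW p G g * sigma p G = inlW p G (shiftAut p G (ofAdd (-1)) g) := by
  rw [sigma, ← map_inv, inlW, ← SemidirectProduct.inl_aut_inv, ← map_inv, ← ofAdd_neg]

lemma Delta_eq (g : ZMod p → G) : Delta p G g = g⁻¹ * shiftAut p G (ofAdd (-1)) g := by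
  rw [Delta, mul_assoc (_ * _), mul_assoc _ (sigma p G)⁻¹, ← mul_assoc (sigma p G)⁻¹,
    sigma_inv_mul_inlW_mul_sigma, ← map_inv, ← map_mul]
  rfl

lemma inlW_Delta (g : ZMod p → G) :
    inlW p G (Delta p G g) = ⁅(inlW p G g)⁻¹, (sigma p G)⁻¹⁆ := by
  rw [commutatorElement_def, inv_inv, inv_inv, mul_assoc (_ * _), mul_assoc _ (sigma p G)⁻¹,
    ← mul_assoc (sigma p G)⁻¹, sigma_inv_mul_inlW_mul_sigma, Delta_eq, map_mul, map_inv]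

lemma Delta_apply (g : ZMod p → G) (t : ZMod p) : Delta p G g t = (g t)⁻¹ * g (t - 1) := by
  simp only [Delta_eq, Pi.mul_apply, Pi.inv_apply, shiftAut_apply, toAdd_ofAdd, sub_eq_add_neg]

lemma Delta_commute_shiftAut (k : Multiplicative (ZMod p)) :
    Function.Commute (Delta p G) (shiftAut p G k) := fun g => by
  ext t; simp [Delta_apply, sub_add_eq_add_sub]

lemma lamG_eq (g : G) (j : ℕ) : lamG p G g j = (Delta p G)^[j - 1] (Pi.mulSingle 0 g) := by
  rw [lamG]; congr; ext t; simp [Pi.mulSingle_apply]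

lemma Delta_iterate_lamG (g : G) {j : ℕ} (hj : 1 ≤ j) (n : ℕ) :
    (Delta p G)^[n] (lamG p G g j) = lamG p G g (j + n) := by
  rw [lamG_eq, lamG_eq, ← iterate_add_apply]; congr 1; omega

end Group

section CommGroup

variable {A : Type*} [CommGroup A]

lemma Delta_mul (g h : ZMod p → A) : Delta p A (g * h) = Delta p A g * Delta p A h := by
  ext t; simp only [Delta_apply, Pi.mul_apply, mul_inv]; exact mul_mul_mul_comm ..

variable (p A) in
def DeltaPow (n : ℕ) : (ZMod p → A) →* (ZMod p → A) :=
  MonoidHom.mk' (Delta p A)^[n] (iterate_map_mul (MonoidHom.mk' (Delta p A) Delta_mul) n)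

@[simp]
lemma coe_DeltaPow (n : ℕ) : ⇑(DeltaPow p A n) = (Delta p A)^[n] := rfl

lemma mul_inlW_mul_inv (w : W p A) (b : ZMod p → A) :
    w * inlW p A b * w⁻¹ = inlW p A (shiftAut p A w.right b) := by
  ext t <;> simp [inlW]

lemma commutatorElement_inlW (b : ZMod p → A) (w : W p A) :
    ⁅inlW p A b, w⁆ = inlW p A (b / shiftAut p A w.right b) := by
  rw [commutatorElement_def, mul_assoc (inlW p A b), mul_assoc (inlW p A b), ← map_inv,
    mul_inlW_mul_inv, ← map_mul, map_inv, div_eq_mul_inv]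

lemma div_shiftAut_mem_range [NeZero p] (b : ZMod p → A) (k : Multiplicative (ZMod p)) :
    b / shiftAut p A k b ∈ (DeltaPow p A 1).range := by
  obtain ⟨m, rfl⟩ := exists_ofAdd_neg_one_pow_eq k
  rw [← shiftAut_iterate]
  induction m with
  | zero => simp
  | succ m ih =>
    rw [iterate_succ_apply', ← div_mul_div_cancel b ((shiftAut p A (ofAdd (-1)))^[m] b)]
    refine mul_mem ih (inv_mem_iff.1 ⟨(shiftAut p A (ofAdd (-1)))^[m] b, ?_⟩)
    simp [Delta_eq, div_eq_mul_inv, mul_comm]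

lemma gammaStar_eq_range [NeZero p] (n : ℕ) :
    gammaStar p A n = ((inlW p A).comp (DeltaPow p A n)).range := by
  induction n with
  | zero => rfl
  | succ n ih =>
    rw [gammaStar, ih]
    apply le_antisymm
    · rw [Subgroup.commutator_le]
      rintro _ ⟨g, rfl⟩ w -
      obtain ⟨h, hh⟩ := div_shiftAut_mem_range g w.right
      refine ⟨h, ?_⟩
      simp only [MonoidHom.comp_apply, coe_DeltaPow, iterate_succ_apply, commutatorElement_inlW]
      rw [← (Delta_commute_shiftAut _).iterate_left n g, show Delta p A h = _ from hh]
      exact congrArg _ (map_div (DeltaPow p A n) _ _)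
    · rintro _ ⟨g, rfl⟩
      rw [MonoidHom.comp_apply, coe_DeltaPow, iterate_succ_apply', inlW_Delta]
      exact Subgroup.commutator_mem_commutator (inv_mem ⟨g, rfl⟩) (Subgroup.mem_top _)

lemma lamG_mul (a b : A) (j : ℕ) : lamG p A (a * b) j = lamG p A a j * lamG p A b j := by
  simp only [lamG_eq, Pi.mulSingle_mul, ← coe_DeltaPow, map_mul]

lemma lamG_one (j : ℕ) : lamG p A 1 j = 1 := by
  simp only [lamG_eq, Pi.mulSingle_one, ← coe_DeltaPow, map_one]

variable (p A) in
def lamProd (i : ℕ) : (ℕ → A) →* (ZMod p → A) where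
  toFun c := ∏ j ∈ Icc i p, lamG p A (c j) j
  map_one' := by simp [lamG_one]
  map_mul' c c' := by simp only [Pi.mul_apply, lamG_mul, prod_mul_distrib]

lemma lamProd_apply (i : ℕ) (c : ℕ → A) :
    lamProd p A i c = ∏ j ∈ Icc i p, lamG p A (c j) j := rfl

lemma lamProd_eq_lamProd_one {i : ℕ} (hi : 1 ≤ i) (c : ℕ → A) :
    lamProd p A i c = lamProd p A 1 (fun j => if i ≤ j then c j else 1) := by
  have hIcc : (Icc 1 p).filter (i ≤ ·) = Icc i p := by ext j; simp; omega
  rw [lamProd_apply, lamProd_apply, ← hIcc, prod_filter]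
  exact prod_congr rfl fun j _ => by split_ifs <;> simp [lamG_one]

variable [Fact p.Prime]

lemma Delta_iterate_prime_eq_one (hA : ∀ a : A, a ^ p = 1) (g : ZMod p → A) :
    (Delta p A)^[p] g = 1 := by
  set d : AddMonoid.End (Additive (ZMod p → A)) := (DeltaPow p A 1).toAdditive
  have hchar : (p : AddMonoid.End (Additive (ZMod p → A))) = 0 := by
    refine AddMonoid.End.ext _ fun x => ?_
    rw [AddMonoid.End.natCast_apply, ← ofMul_toMul x, ← ofMul_pow]
    exact congrArg Additive.ofMul (funext fun t => hA _)
  have hshift : Semiconj Additive.ofMul (shiftAut p A (ofAdd (-1))) ⇑(d + 1) := fun g => by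
    show Additive.ofMul _ = Additive.ofMul (Delta p A g * g)
    rw [Delta_eq, inv_mul_cancel_comm]
  have hperiod : (d + 1) ^ p = 1 := by
    refine AddMonoid.End.ext _ fun x => ?_
    rw [AddMonoid.End.coe_pow, ← ofMul_toMul x, ← (hshift.iterate_right p).eq, shiftAut_iterate,
      ← ofAdd_nsmul, nsmul_eq_mul, ZMod.natCast_self, zero_mul, ofAdd_zero, map_one]
    rfl
  have := congrArg (· (Additive.ofMul g))
    (pow_eq_zero_of_add_one_pow_eq_one Fact.out hchar hperiod)
  rwa [AddMonoid.End.coe_pow] at this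

lemma Delta_iterate_eq_one (hA : ∀ a : A, a ^ p = 1) {n : ℕ} (hn : p ≤ n) (g : ZMod p → A) :
    (Delta p A)^[n] g = 1 := by
  rw [← Nat.sub_add_cancel hn, iterate_add_apply, Delta_iterate_prime_eq_one hA, ← coe_DeltaPow,
    map_one]

lemma lamG_eq_one_of_lt (hA : ∀ a : A, a ^ p = 1) (a : A) {j : ℕ} (hj : p < j) :
    lamG p A a j = 1 := by
  rw [lamG_eq]; exact Delta_iterate_eq_one hA (by omega) _

lemma Delta_iterate_lamProd_one (hA : ∀ a : A, a ^ p = 1) (n : ℕ) (c : ℕ → A) :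
    (Delta p A)^[n] (lamProd p A 1 c) = lamProd p A (n + 1) (fun j => c (j - n)) := by
  rw [← coe_DeltaPow, lamProd_apply, map_prod, coe_DeltaPow]
  calc ∏ j ∈ Icc 1 p, (Delta p A)^[n] (lamG p A (c j) j)
      = ∏ j ∈ Icc 1 p, lamG p A (c (j + n - n)) (j + n) :=
        prod_congr rfl fun j hj => by rw [Delta_iterate_lamG _ (mem_Icc.1 hj).1, Nat.add_sub_cancel]
    _ = ∏ j ∈ Icc (1 + n) (p + n), lamG p A (c (j - n)) j := by
        rw [← map_add_right_Icc, prod_map]; rfl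
    _ = ∏ j ∈ Icc (n + 1) p, lamG p A (c (j - n)) j := by
        refine (prod_subset (Icc_subset_Icc (by omega) (by omega)) fun j hj hj' => ?_).symm
        simp only [mem_Icc] at hj hj'
        exact lamG_eq_one_of_lt hA _ (by omega)

lemma lamProd_one_surjective (hA : ∀ a : A, a ^ p = 1) : Surjective (lamProd p A 1) := by
  rw [← MonoidHom.range_eq_top, Subgroup.eq_top_iff']
  set S := (lamProd p A 1).range
  have hDelta : ∀ g ∈ S, Delta p A g ∈ S := by
    rintro _ ⟨c, rfl⟩
    rw [← iterate_one (Delta p A), Delta_iterate_lamProd_one hA, lamProd_eq_lamProd_one le_add_self]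
    exact ⟨_, rfl⟩
  have hshift (k : Multiplicative (ZMod p)) : ∀ g ∈ S, shiftAut p A k g ∈ S := by
    obtain ⟨m, rfl⟩ := exists_ofAdd_neg_one_pow_eq k
    rw [← shiftAut_iterate]
    induction m with
    | zero => exact fun g hg => hg
    | succ m ih =>
      intro g hg
      rw [iterate_succ_apply]
      refine ih _ ?_
      rw [← inv_mul_cancel_comm g (shiftAut p A (ofAdd (-1)) g), ← Delta_eq]
      exact mul_mem (hDelta g hg) hg
  have hsingle (a : A) : Pi.mulSingle 0 a ∈ S := by
    refine ⟨Pi.mulSingle 1 a, ?_⟩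
    rw [lamProd_apply, prod_eq_single_of_mem 1 (by simp [(Fact.out : p.Prime).one_le])
      fun j _ hj => by rw [Pi.mulSingle_eq_of_ne hj, lamG_one], Pi.mulSingle_eq_same, lamG_eq]
    rfl
  intro g
  rw [← univ_prod_mulSingle g]
  refine prod_mem fun t _ => ?_
  convert hshift (ofAdd (-t)) _ (hsingle (g t)) using 1
  ext s
  simp only [shiftAut_apply, Pi.mulSingle_apply, toAdd_ofAdd, ← sub_eq_add_neg, sub_eq_zero]

lemma eq_of_lamProd_one_eq [Fintype A] (hA : ∀ a : A, a ^ p = 1) {c c' : ℕ → A}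
    (h : lamProd p A 1 c = lamProd p A 1 c') : ∀ j ∈ Icc 1 p, c j = c' j := by
  let ψ : (Icc 1 p → A) → (ZMod p → A) := fun a => ∏ j : Icc 1 p, lamG p A (a j) j
  have hψ (c : ℕ → A) : ψ (fun j => c j) = lamProd p A 1 c :=
    prod_coe_sort (Icc 1 p) fun j => lamG p A (c j) j
  have hcard : Fintype.card (Icc 1 p → A) = Fintype.card (ZMod p → A) := by
    simp [ZMod.card]
  have hbij := (Fintype.bijective_iff_surjective_and_card ψ).2
    ⟨fun g => (lamProd_one_surjective hA g).elim fun c hc => ⟨_, (hψ c).trans hc⟩, hcard⟩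
  intro j hj
  exact congrFun (hbij.1 ((hψ c).trans (h.trans (hψ c').symm))) ⟨j, hj⟩

end CommGroup

end GGS

theorem statement9_general (p : ℕ) [Fact p.Prime]
    (A : Type*) [CommGroup A] [Fintype A] (hA : ∀ a : A, a ^ p = 1)
    (i : ℕ) (hi1 : 1 ≤ i) :
    (∀ x : W p A, x ∈ gammaStar p A (i - 1) →
      ∃ c : ℕ → A, x = inlW p A (∏ j ∈ Finset.Icc i p, lamG p A (c j) j))
    ∧ (∀ c c' : ℕ → A,
        inlW p A (∏ j ∈ Finset.Icc i p, lamG p A (c j) j)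
          = inlW p A (∏ j ∈ Finset.Icc i p, lamG p A (c' j) j) →
        ∀ j ∈ Finset.Icc i p, c j = c' j) := by
  refine ⟨fun x hx => ?_, fun c c' h j hj => ?_⟩
  · rw [gammaStar_eq_range] at hx
    obtain ⟨g, rfl⟩ := hx
    obtain ⟨c, rfl⟩ := lamProd_one_surjective hA g
    refine ⟨fun j => c (j - (i - 1)), ?_⟩
    rw [MonoidHom.comp_apply, coe_DeltaPow, Delta_iterate_lamProd_one hA, Nat.sub_add_cancel hi1]
    rfl
  · rw [← lamProd_apply, ← lamProd_apply, lamProd_eq_lamProd_one hi1,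
      lamProd_eq_lamProd_one hi1] at h
    have hj' := Finset.mem_Icc.1 hj
    simpa [hj'.1] using eq_of_lamProd_one_eq hA (SemidirectProduct.inl_injective h) j
      (Finset.mem_Icc.2 ⟨hi1.trans hj'.1, hj'.2⟩)

/-- For an elementary abelian finite p-group A and 1 ≤ i ≤ p, every element of γ_i*(W(A))
    can be written as λ_i(a_i)·λ_{i+1}(a_{i+1})·⋯·λ_p(a_p) with a_i,…,a_p ∈ A, and this
    representation is unique.
    (γ_i*(W(A)) = `gammaStar p A (i-1)`, λ_j(a) = `lamG p A a j`.) -/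
theorem statement9 (p : ℕ) [Fact p.Prime] (hp : Odd p)
    (A : Type*) [CommGroup A] [Fintype A] (hA : ∀ a : A, a ^ p = 1)
    (i : ℕ) (hi1 : 1 ≤ i) (hip : i ≤ p) :
    (∀ x : W p A, x ∈ gammaStar p A (i - 1) →
      ∃ c : ℕ → A, x = inlW p A (∏ j ∈ Finset.Icc i p, lamG p A (c j) j))
    ∧ (∀ c c' : ℕ → A,
        inlW p A (∏ j ∈ Finset.Icc i p, lamG p A (c j) j)
          = inlW p A (∏ j ∈ Finset.Icc i p, lamG p A (c' j) j) →
        ∀ j ∈ Finset.Icc i p, c j = c' j) :=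
  statement9_general p A hA i hi1
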